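/- arXiv:2604.08604 — 9 statements merged into one kernel-verified Lean document; each statement's English description precedes it below -/
import Mathlib

section
/- Let S be a finite set and let A, B be deterministic instruments on S, given by output functions A_x : S → X_A, B_x : S → X_B and state-update functions A_s, B_s : S → S. Then A and B exhibit an order effect (i.e. there exist s ∈ S, a ∈ X_A, b ∈ X_B with [A_x(s) = a and B_x(A_s(s)) = b] ≠ [B_x(s) = b and A_x(B_s(s)) = a] as indicator values) if and only if B_x ∘ A_s ≠ B_x or A_x ∘ B_s ≠ A_x. -/
/-- Deterministic instruments exhibit an order effect iff
`B_x ∘ A_s ≠ B_x` or `A_x ∘ B_s ≠ A_x`. -/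
theorem deterministic_order_effect_iff
    {S XA XB : Type*} [Fintype S] [DecidableEq XA] [DecidableEq XB]
    (Ax : S → XA) (As : S → S) (Bx : S → XB) (Bs : S → S) :
    (∃ (s : S) (a : XA) (b : XB),
        (if Ax s = a ∧ Bx (As s) = b then (1:ℝ) else 0) ≠
        (if Bx s = b ∧ Ax (Bs s) = a then (1:ℝ) else 0)) ↔
    (Bx ∘ As ≠ Bx ∨ Ax ∘ Bs ≠ Ax) := by
  constructor
  · rintro ⟨s, a, b, h⟩
    by_contra hc
    push_neg at hc
    obtain ⟨h1, h2⟩ := hc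
    have e1 : Bx (As s) = Bx s := congrFun h1 s
    have e2 : Ax (Bs s) = Ax s := congrFun h2 s
    apply h
    rw [e1, e2]
    simp [and_comm]
  · rintro (h | h)
    · obtain ⟨s, hs⟩ := Function.ne_iff.mp h
      simp only [Function.comp_apply] at hs
      refine ⟨s, Ax s, Bx (As s), ?_⟩
      rw [if_pos ⟨rfl, rfl⟩, if_neg (fun hh => hs hh.1.symm)]
      norm_num
    · obtain ⟨s, hs⟩ := Function.ne_iff.mp h
      simp only [Function.comp_apply] at hs
      refine ⟨s, Ax (Bs s), Bx s, ?_⟩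
      rw [if_neg (fun hh => hs hh.1.symm), if_pos ⟨rfl, rfl⟩]
      norm_num
end

section
/- Let P = (P_x)_{x ∈ X} and Q = (Q_y)_{y ∈ Y} be projective measurements on a finite-dimensional complex Hilbert space H (each P_x, Q_y an orthogonal projection, with ∑_x P_x = 1 and ∑_y Q_y = 1). If for every unit vector ψ ∈ H and all x ∈ X, y ∈ Y one has ‖Q_y P_x ψ‖² = ‖P_x Q_y ψ‖², then P_x Q_y = Q_y P_x for all x, y. -/
open scoped InnerProductSpace

private lemma proj_inner_sq {H : Type*} [NormedAddCommGroup H] [InnerProductSpace ℂ H]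
    (q : H →ₗ[ℂ] H) (hq : q.IsSymmetric) (hqi : ∀ v, q (q v) = q v) (v : H) :
    ⟪q v, v⟫_ℂ = (‖q v‖ : ℂ) ^ 2 := by
  have h1 : ⟪q v, v⟫_ℂ = ⟪q v, q v⟫_ℂ := by
    rw [hq v v, hq v (q v), hqi]
  rw [h1]
  exact inner_self_eq_norm_sq_to_K (q v)

/-- If two projective measurements exhibit no order effect on any pure state,
then they commute. -/
theorem projective_no_order_effect_commute
    {H : Type*} [NormedAddCommGroup H] [InnerProductSpace ℂ H] [FiniteDimensional ℂ H]
    {X Y : Type*} [Fintype X] [Fintype Y]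
    (P : X → H →ₗ[ℂ] H) (Q : Y → H →ₗ[ℂ] H)
    (hPsym : ∀ x, (P x).IsSymmetric) (hPidem : ∀ x, P x * P x = P x)
    (hQsym : ∀ y, (Q y).IsSymmetric) (hQidem : ∀ y, Q y * Q y = Q y)
    (hPsum : ∑ x, P x = 1) (hQsum : ∑ y, Q y = 1)
    (h : ∀ ψ : H, ‖ψ‖ = 1 → ∀ (x : X) (y : Y),
        ‖Q y (P x ψ)‖ ^ 2 = ‖P x (Q y ψ)‖ ^ 2) :
    ∀ (x : X) (y : Y), P x * Q y = Q y * P x := by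
  intro x y
  set p := P x with hp_def
  set q := Q y with hq_def
  have hp : p.IsSymmetric := hPsym x
  have hq : q.IsSymmetric := hQsym y
  have hpi : ∀ v, p (p v) = p v := fun v => DFunLike.congr_fun (hPidem x) v
  have hqi : ∀ v, q (q v) = q v := fun v => DFunLike.congr_fun (hQidem y) v
  -- Step 1: the norm identity holds for all vectors, by scaling
  have hall : ∀ ψ : H, ‖q (p ψ)‖ ^ 2 = ‖p (q ψ)‖ ^ 2 := by
    intro ψ
    by_cases hψ : ψ = 0
    · simp [hψ]
    · have hn : ‖ψ‖ ≠ 0 := norm_ne_zero_iff.mpr hψ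
      have hunit : ‖((‖ψ‖ : ℂ)⁻¹ • ψ)‖ = 1 := by
        rw [norm_smul]; simp [hn]
      have := h _ hunit x y
      rw [map_smul, map_smul, map_smul, map_smul, norm_smul, norm_smul,
        mul_pow, mul_pow] at this
      have hc : ‖((‖ψ‖ : ℂ)⁻¹)‖ ^ 2 ≠ 0 := by simp [hn]
      exact mul_left_cancel₀ hc this
  -- Step 2: p q p = q p q
  have key : p ∘ₗ q ∘ₗ p = q ∘ₗ p ∘ₗ q := by
    rw [← sub_eq_zero, ← inner_map_self_eq_zero]
    intro ψ
    rw [LinearMap.sub_apply, inner_sub_left, sub_eq_zero]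
    simp only [LinearMap.comp_apply]
    rw [hp (q (p ψ)) ψ, hq (p (q ψ)) ψ,
      proj_inner_sq q hq hqi (p ψ), proj_inner_sq p hp hpi (q ψ)]
    exact_mod_cast congrArg (fun r : ℝ => (r : ℂ)) (hall ψ)
  have keyv : ∀ v, p (q (p v)) = q (p (q v)) := fun v => DFunLike.congr_fun key v
  -- Step 3: p q = q p
  ext ψ
  rw [Module.End.mul_apply, Module.End.mul_apply]
  have expand : ⟪p (q ψ) - q (p ψ), p (q ψ) - q (p ψ)⟫_ℂ = 0 := by
    rw [inner_sub_left, inner_sub_right, inner_sub_right]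
    have t1 : ⟪p (q ψ), p (q ψ)⟫_ℂ = ⟪q ψ, p (q ψ)⟫_ℂ := by
      rw [hp (q ψ) (p (q ψ)), hpi]
    have t2 : ⟪p (q ψ), q (p ψ)⟫_ℂ = ⟪q ψ, p (q (p ψ))⟫_ℂ := hp _ _
    have t3 : ⟪q (p ψ), p (q ψ)⟫_ℂ = ⟪p ψ, q (p (q ψ))⟫_ℂ := hq _ _
    have t4 : ⟪q (p ψ), q (p ψ)⟫_ℂ = ⟪p ψ, q (p ψ)⟫_ℂ := by
      rw [hq (p ψ) (q (p ψ)), hqi]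
    rw [t1, t2, t3, t4, keyv ψ]
    have A : ⟪q ψ, q (p (q ψ))⟫_ℂ = ⟪q ψ, p (q ψ)⟫_ℂ := by
      rw [← hq (q ψ) (p (q ψ)), hqi]
    have B : ⟪p ψ, q (p (q ψ))⟫_ℂ = ⟪p ψ, q (p ψ)⟫_ℂ := by
      rw [← keyv ψ, ← hp (p ψ) (q (p ψ)), hpi]
    rw [A, B]; ring
  have := inner_self_eq_zero.mp expand
  exact sub_eq_zero.mp this
end

section
/- Let S be a finite set and let A, B be classical instruments on S (probability channels A(X_A, S | S), B(X_B, S | S)). Fix an initial probability distribution ρ on S. If A and B exhibit no order effect in ρ (i.e. for all a ∈ X_A, b ∈ X_B, the probability of outcomes (a, b) applying A then B to ρ, summing out the final state, equals the probability of outcomes (b, a) applying B then A to ρ), then A exhibits no interference effect on B in ρ: for all b ∈ X_B, ∑_{a ∈ X_A} P_{A then B}(a, b) = P_B(b), where P_B(b) = ∑_{s,s'} B(b, s' | s) ρ(s). -/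
/-- For classical instruments, absence of an order effect in a state `ρ` implies
absence of an interference effect of `A` on `B` in `ρ`. -/
theorem classical_no_order_effect_no_interference
    {S XA XB : Type*} [Fintype S] [Fintype XA] [Fintype XB]
    (A : S → XA → S → ℝ) (B : S → XB → S → ℝ) (ρ : S → ℝ)
    (hA0 : ∀ s x s', 0 ≤ A s x s') (hA1 : ∀ s, ∑ x, ∑ s', A s x s' = 1)
    (hB0 : ∀ s y s', 0 ≤ B s y s') (hB1 : ∀ s, ∑ y, ∑ s', B s y s' = 1)
    (hρ0 : ∀ s, 0 ≤ ρ s) (hρ1 : ∑ s, ρ s = 1)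
    (hOE : ∀ (a : XA) (b : XB),
        ∑ s, ∑ t, ∑ u, B t b u * A s a t * ρ s =
        ∑ s, ∑ t, ∑ u, A t a u * B s b t * ρ s) :
    ∀ b : XB,
      ∑ a, ∑ s, ∑ t, ∑ u, B t b u * A s a t * ρ s =
      ∑ s, ∑ s', B s b s' * ρ s := by
  intro b
  have : ∑ a, ∑ s, ∑ t, ∑ u, B t b u * A s a t * ρ s =
      ∑ a : XA, ∑ s, ∑ t, ∑ u, A t a u * B s b t * ρ s := by
    exact Finset.sum_congr rfl fun a _ => hOE a b
  rw [this]
  rw [Finset.sum_comm]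
  refine Finset.sum_congr rfl fun s _ => ?_
  rw [Finset.sum_comm]
  refine Finset.sum_congr rfl fun t _ => ?_
  calc ∑ a : XA, ∑ u, A t a u * B s b t * ρ s
      = (∑ a : XA, ∑ u, A t a u) * (B s b t * ρ s) := by
        rw [Finset.sum_mul]; exact Finset.sum_congr rfl fun a _ => by
          rw [Finset.sum_mul]; exact Finset.sum_congr rfl fun u _ => by ring
    _ = B s b t * ρ s := by rw [hA1 t, one_mul]
end

section
/- Let P = (P_y, P_n) and Q = (Q_y, Q_n) be two-outcome projective measurements on a finite-dimensional Hilbert space H, so P_n = 1 − P_y and Q_n = 1 − Q_y, with the P's and Q's orthogonal projections. Then for every density matrix ρ: Tr(Q_y P_y ρ P_y Q_y) + Tr(Q_n P_n ρ P_n Q_n) = Tr(P_y Q_y ρ Q_y P_y) + Tr(P_n Q_n ρ Q_n P_n). (QQ-equality for projective instruments.) -/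
/-- QQ-equality for two-outcome projective instruments: for any density matrix ρ,
`Tr(Q_y P_y ρ P_y Q_y) + Tr(Q_n P_n ρ P_n Q_n) = Tr(P_y Q_y ρ Q_y P_y) + Tr(P_n Q_n ρ Q_n P_n)`
where `P_n = 1 - P_y`, `Q_n = 1 - Q_y`. -/
theorem projective_QQ_equality
    {H : Type*} [NormedAddCommGroup H] [InnerProductSpace ℂ H] [FiniteDimensional ℂ H]
    (Py Qy : H →ₗ[ℂ] H)
    (hPsym : Py.IsSymmetric) (hPidem : Py * Py = Py)
    (hQsym : Qy.IsSymmetric) (hQidem : Qy * Qy = Qy)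
    (ρ : H →ₗ[ℂ] H) (hρsym : ρ.IsSymmetric)
    (hρpos : ∀ v : H, 0 ≤ (inner ℂ (ρ v) v : ℂ).re)
    (hρtr : LinearMap.trace ℂ H ρ = 1) :
    LinearMap.trace ℂ H (Qy * Py * ρ * Py * Qy) +
      LinearMap.trace ℂ H ((1 - Qy) * (1 - Py) * ρ * (1 - Py) * (1 - Qy)) =
    LinearMap.trace ℂ H (Py * Qy * ρ * Qy * Py) +
      LinearMap.trace ℂ H ((1 - Py) * (1 - Qy) * ρ * (1 - Qy) * (1 - Py)) := by
  have hPn : (1 - Py) * (1 - Py) = 1 - Py := by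
    noncomm_ring
    rw [hPidem]; abel
  have hQn : (1 - Qy) * (1 - Qy) = 1 - Qy := by
    noncomm_ring
    rw [hQidem]; abel
  -- reduce each term to Tr(X ρ) by cyclicity
  have cyc : ∀ A B : H →ₗ[ℂ] H, B * B = B →
      LinearMap.trace ℂ H (B * A * ρ * A * B) = LinearMap.trace ℂ H ((A * B * A) * ρ) := by
    intro A B hB
    have h1 : B * A * ρ * A * B = (B * A * ρ) * (A * B) := by noncomm_ring
    rw [h1, LinearMap.trace_mul_comm]
    congr 1
    have : A * B * (B * A * ρ) = (A * (B * B) * A) * ρ := by noncomm_ring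
    rw [this, hB]
  rw [cyc Py Qy hQidem, cyc (1 - Py) (1 - Qy) hQn, cyc Qy Py hPidem,
    cyc (1 - Qy) (1 - Py) hPn, ← map_add, ← map_add, ← add_mul, ← add_mul]
  congr 2
  have expand : ∀ A B : H →ₗ[ℂ] H, A * A = A → B * B = B →
      A * B * A + (1 - A) * (1 - B) * (1 - A) = 1 - A - B + A * B + B * A := by
    intro A B hA hB
    have : (1 - A) * (1 - B) * (1 - A)
        = 1 - A - B + B * A - (A - A*A - A*B + A*B*A) := by noncomm_ring
    rw [this, hA]
    noncomm_ring
  rw [expand Py Qy hPidem hQidem, expand Qy Py hQidem hPidem]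
  noncomm_ring
end

section
/- Let E = (E_x)_{x ∈ X} be a POVM on a finite-dimensional Hilbert space H (positive operators with ∑_x E_x = 1) whose associated Lüders instrument ρ ↦ √E_x ρ √E_x is repeatable, i.e. for every unit vector ψ and all x, y ∈ X: ‖√E_y √E_x ψ‖² = δ_{x,y} ‖√E_x ψ‖². Then each E_x is an orthogonal projection. -/
/-- If the Lüders instrument of a POVM `E = (a_x²)` (with `a_x = √E_x` the positive
square roots) is repeatable, then each `E_x` is an orthogonal projection. -/
theorem repeatable_povm_is_projective
    {H : Type*} [NormedAddCommGroup H] [InnerProductSpace ℂ H] [FiniteDimensional ℂ H]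
    {X : Type*} [Fintype X] [DecidableEq X]
    (a : X → H →ₗ[ℂ] H)
    (hsym : ∀ x, (a x).IsSymmetric)
    (hpos : ∀ (x : X) (v : H), 0 ≤ (inner ℂ ((a x) v) v : ℂ).re)
    (hsum : ∑ x, a x * a x = 1)
    (hrep : ∀ ψ : H, ‖ψ‖ = 1 → ∀ x y : X,
        ‖(a y) ((a x) ψ)‖ ^ 2 = (if x = y then (1:ℝ) else 0) * ‖(a x) ψ‖ ^ 2) :
    ∀ x : X, (a x * a x) * (a x * a x) = a x * a x ∧ (a x * a x).IsSymmetric := by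
  intro x
  have key : ∀ v : H, ∀ y : X, y ≠ x → (a y) ((a x) v) = 0 := by
    intro v y hy
    rcases eq_or_ne v 0 with rfl | hv
    · simp
    · set ψ := (‖v‖⁻¹ : ℂ) • v with hψdef
      have hψ : ‖ψ‖ = 1 := by
        simp [hψdef, norm_smul]
        field_simp [norm_ne_zero_iff.mpr hv]
      have h := hrep ψ hψ x y
      rw [if_neg (fun hxy => hy hxy.symm), zero_mul] at h
      have hz : (a y) ((a x) ψ) = 0 := by
        have := pow_eq_zero_iff (n := 2) (by norm_num) |>.mp h
        exact norm_eq_zero.mp this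
      have hv' : v = (‖v‖ : ℂ) • ψ := by
        rw [hψdef, smul_smul]
        field_simp [norm_ne_zero_iff.mpr hv]
        simp
      rw [hv', map_smul, map_smul, hz, smul_zero]
  have cube : ∀ v : H, (a x) ((a x) ((a x) v)) = (a x) v := by
    intro v
    have h := congrArg (fun L : H →ₗ[ℂ] H => L ((a x) v)) hsum
    simp only [LinearMap.sum_apply, Module.End.mul_apply, Module.End.one_apply] at h
    rwa [Finset.sum_eq_single x (fun y _ hy => by rw [key v y hy, map_zero])
      (fun hx => absurd (Finset.mem_univ x) hx)] at h
  constructor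
  · apply LinearMap.ext
    intro v
    simp only [Module.End.mul_apply]
    rw [cube]
  · intro u v
    simp only [Module.End.mul_apply]
    rw [hsym x, hsym x]
end

section
/- Let E = (E_x)_{x∈X} and F = (F_y)_{y∈Y} be POVMs on a finite-dimensional Hilbert space H, let a_x = √E_x, b_y = √F_y, and let ψ be a unit vector. Suppose the Lüders instruments satisfy RRE on ψ: (i) ‖a_y a_x ψ‖² = δ_{x,y}‖a_x ψ‖² and ‖b_z b_y ψ‖² = δ_{y,z}‖b_y ψ‖² (repeatability), and (ii) ‖a_z b_y a_x ψ‖² = δ_{x,z}‖b_y a_x ψ‖² and ‖b_z a_x b_y ψ‖² = δ_{y,z}‖a_x b_y ψ‖². Then a_x b_y ψ = b_y a_x ψ for all x ∈ X, y ∈ Y, and a_x² ψ = a_x ψ for all x. -/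
open scoped InnerProductSpace

section Aux
variable {H : Type*} [NormedAddCommGroup H] [InnerProductSpace ℂ H] [FiniteDimensional ℂ H]

lemma fix_of_norm_eq {T : H →ₗ[ℂ] H} (hT : T.IsSymmetric)
    (hpos : ∀ v, 0 ≤ (inner ℂ (T v) v : ℂ).re)
    (hcon : ∀ v, ‖T v‖ ≤ ‖v‖) {v : H} (hv : ‖T v‖ = ‖v‖) : T v = v := by
  classical
  set B := hT.eigenvectorBasis rfl with hB
  set μ := hT.eigenvalues (n := Module.finrank ℂ H) rfl with hμdef
  have hnormB : ∀ i, ‖B i‖ = 1 := fun i => B.orthonormal.1 i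
  have hμ0 : ∀ i, 0 ≤ μ i := by
    intro i
    have h1 : T (B i) = (μ i : ℂ) • B i := hT.apply_eigenvectorBasis rfl i
    have h2 := hpos (B i)
    rw [h1, inner_smul_left] at h2
    have h3 : (⟪B i, B i⟫_ℂ).re = 1 := by
      rw [← RCLike.re_to_complex, inner_self_eq_norm_sq, hnormB i]; norm_num
    simpa [h3] using h2
  have hμ1 : ∀ i, μ i ≤ 1 := by
    intro i
    have h1 : T (B i) = (μ i : ℂ) • B i := hT.apply_eigenvectorBasis rfl i
    have h2 := hcon (B i)
    rw [h1, norm_smul, hnormB i] at h2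
    calc μ i ≤ |μ i| := le_abs_self _
      _ ≤ 1 := by simpa [hnormB i] using h2
  have hrepr : ∀ w : H, ‖w‖ ^ 2 = ∑ i, ‖B.repr w i‖ ^ 2 := by
    intro w
    rw [← B.repr.norm_map w, EuclideanSpace.norm_eq, Real.sq_sqrt]
    positivity
  have hTv : ∀ i, B.repr (T v) i = (μ i : ℂ) * B.repr v i := fun i =>
    hT.eigenvectorBasis_apply_self_apply rfl v i
  have hsum : ∑ i, ‖B.repr v i‖ ^ 2 = ∑ i, ‖B.repr (T v) i‖ ^ 2 := by
    rw [← hrepr, ← hrepr, hv]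
  have hle : ∀ i ∈ Finset.univ, ‖B.repr (T v) i‖ ^ 2 ≤ ‖B.repr v i‖ ^ 2 := by
    intro i _
    rw [hTv i, norm_mul, Complex.norm_real, Real.norm_eq_abs, abs_of_nonneg (hμ0 i), mul_pow]
    have h1 : μ i ^ 2 ≤ 1 := by nlinarith [hμ0 i, hμ1 i]
    nlinarith [sq_nonneg ‖B.repr v i‖]
  have heach := (Finset.sum_eq_sum_iff_of_le hle).1 hsum.symm
  apply B.repr.injective
  ext i
  have hi := (heach i (Finset.mem_univ i)).symm
  rw [hTv i, norm_mul, Complex.norm_real, Real.norm_eq_abs, abs_of_nonneg (hμ0 i), mul_pow] at hi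
  rw [hTv i]
  by_cases hc : B.repr v i = 0
  · simp [hc]
  · have hc2 : 0 < ‖B.repr v i‖ ^ 2 := by
      have : ‖B.repr v i‖ ≠ 0 := norm_ne_zero_iff.2 hc
      positivity
    have hm2 : μ i ^ 2 = 1 := by
      have h4 : μ i ^ 2 * ‖B.repr v i‖ ^ 2 = 1 * ‖B.repr v i‖ ^ 2 := by
        rw [one_mul]; linarith [hi]
      exact mul_right_cancel₀ (ne_of_gt hc2) h4
    have hm : μ i = 1 := by nlinarith [hμ0 i]
    simp [hm]

end Aux

private lemma norm_eq_of_sq_eq' {r s : ℝ} (hr : 0 ≤ r) (hs : 0 ≤ s) (h : r ^ 2 = s ^ 2) :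
    r = s := by rw [← Real.sqrt_sq hr, ← Real.sqrt_sq hs, h]

/-- If the Lüders instruments of two POVMs satisfy RRE on a unit vector ψ, then
the square roots commute on ψ and act idempotently on ψ. -/
theorem rre_implies_commute_on_state
    {H : Type*} [NormedAddCommGroup H] [InnerProductSpace ℂ H] [FiniteDimensional ℂ H]
    {X Y : Type*} [Fintype X] [Fintype Y] [DecidableEq X] [DecidableEq Y]
    (a : X → H →ₗ[ℂ] H) (b : Y → H →ₗ[ℂ] H)
    (hasym : ∀ x, (a x).IsSymmetric)
    (hapos : ∀ (x : X) (v : H), 0 ≤ (inner ℂ ((a x) v) v : ℂ).re)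
    (hasum : ∑ x, a x * a x = 1)
    (hbsym : ∀ y, (b y).IsSymmetric)
    (hbpos : ∀ (y : Y) (v : H), 0 ≤ (inner ℂ ((b y) v) v : ℂ).re)
    (hbsum : ∑ y, b y * b y = 1)
    (ψ : H) (hψ : ‖ψ‖ = 1)
    (hrepA : ∀ x y : X,
        ‖(a y) ((a x) ψ)‖ ^ 2 = (if x = y then (1:ℝ) else 0) * ‖(a x) ψ‖ ^ 2)
    (hrepB : ∀ y z : Y,
        ‖(b z) ((b y) ψ)‖ ^ 2 = (if y = z then (1:ℝ) else 0) * ‖(b y) ψ‖ ^ 2)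
    (hrreA : ∀ (x z : X) (y : Y),
        ‖(a z) ((b y) ((a x) ψ))‖ ^ 2 =
          (if x = z then (1:ℝ) else 0) * ‖(b y) ((a x) ψ)‖ ^ 2)
    (hrreB : ∀ (y z : Y) (x : X),
        ‖(b z) ((a x) ((b y) ψ))‖ ^ 2 =
          (if y = z then (1:ℝ) else 0) * ‖(a x) ((b y) ψ)‖ ^ 2) :
    (∀ (x : X) (y : Y), (a x) ((b y) ψ) = (b y) ((a x) ψ)) ∧
      (∀ x : X, (a x) ((a x) ψ) = (a x) ψ) := by
  classical
  -- sum of squared norms is the squared norm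
  have hsumN : ∀ v : H, ∑ x, ‖(a x) v‖ ^ 2 = ‖v‖ ^ 2 := by
    intro v
    have h1 : ∀ x : X, (⟪(a x * a x) v, v⟫_ℂ).re = ‖(a x) v‖ ^ 2 := by
      intro x
      rw [Module.End.mul_apply, hasym x ((a x) v) v, ← RCLike.re_to_complex,
        inner_self_eq_norm_sq]
    calc ∑ x, ‖(a x) v‖ ^ 2 = ∑ x, (⟪(a x * a x) v, v⟫_ℂ).re :=
          Finset.sum_congr rfl fun x _ => (h1 x).symm
      _ = (⟪(∑ x, a x * a x) v, v⟫_ℂ).re := by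
          rw [LinearMap.sum_apply, sum_inner, Complex.re_sum]
      _ = ‖v‖ ^ 2 := by
          rw [hasum, Module.End.one_apply, ← RCLike.re_to_complex, inner_self_eq_norm_sq]
  have hcon : ∀ (x : X) (v : H), ‖(a x) v‖ ≤ ‖v‖ := by
    intro x v
    have h2 : ‖(a x) v‖ ^ 2 ≤ ‖v‖ ^ 2 := by
      rw [← hsumN v]
      exact Finset.single_le_sum (f := fun z => ‖(a z) v‖ ^ 2)
        (fun i _ => by positivity) (Finset.mem_univ x)
    nlinarith [norm_nonneg ((a x) v), norm_nonneg v]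
  have hfix : ∀ (x : X) (v : H), ‖(a x) v‖ = ‖v‖ → (a x) v = v := fun x v hv =>
    fix_of_norm_eq (hasym x) (hapos x) (hcon x) hv
  -- idempotence on ψ
  have hidem : ∀ x : X, (a x) ((a x) ψ) = (a x) ψ := by
    intro x
    apply hfix x
    have h := hrepA x x
    rw [if_pos rfl, one_mul] at h
    exact norm_eq_of_sq_eq' (norm_nonneg _) (norm_nonneg _) h
  -- decomposition of ψ
  have hψdec : ψ = ∑ z, (a z) ψ := by
    calc ψ = (∑ z, a z * a z) ψ := by rw [hasum, Module.End.one_apply]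
      _ = ∑ z, (a z) ((a z) ψ) := by rw [LinearMap.sum_apply]; simp [Module.End.mul_apply]
      _ = ∑ z, (a z) ψ := Finset.sum_congr rfl fun z _ => hidem z
  refine ⟨fun x y => ?_, hidem⟩
  have hfix2 : (a x) ((b y) ((a x) ψ)) = (b y) ((a x) ψ) := by
    apply hfix x
    have h := hrreA x x y
    rw [if_pos rfl, one_mul] at h
    exact norm_eq_of_sq_eq' (norm_nonneg _) (norm_nonneg _) h
  have hzero : ∀ z : X, z ≠ x → (a x) ((b y) ((a z) ψ)) = 0 := by
    intro z hz
    have h := hrreA z x y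
    rw [if_neg hz, zero_mul] at h
    exact norm_eq_zero.1 (pow_eq_zero_iff two_ne_zero |>.1 h)
  calc (a x) ((b y) ψ) = ∑ z, (a x) ((b y) ((a z) ψ)) := by
        conv_lhs => rw [hψdec]
        rw [map_sum, map_sum]
    _ = (a x) ((b y) ((a x) ψ)) := by
        apply Finset.sum_eq_single_of_mem x (Finset.mem_univ x)
        intro z _ hz
        exact hzero z hz
    _ = (b y) ((a x) ψ) := hfix2
end

section
/- Let P(A then B) and P(B then A) be arbitrary probability distributions on {y,n} × {y,n}. Define S = {⋆, s_y, s_n}, initial distribution δ_⋆, output function f(s_y) = y, f(s_n) = n (f(⋆) arbitrary), and transition channels T_A, T_B : S → S with T_A(s_x | ⋆) = P(A = x), T_A(s_{x'} | s_x) = P(B = x then A = x')/P(B = x) when P(B = x) := ∑_{x'} P(B = x then A = x') > 0 (arbitrary stochastic column otherwise), T_A(⋆ | ·) = 0, and T_B defined analogously from P(A then B). Then the simple Markov model (S, δ_⋆, (T_A, f), (T_B, f)) reproduces the data: for all x, x' ∈ {y,n}, ∑_{s,s' : f(s)=x, f(s')=x'} T_B(s' | s) T_A(s | ⋆) = P(A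 = x then B = x'), and similarly with A and B interchanged. -/
lemma three_state_aux (P : Bool → Bool → ℝ) (hP0 : ∀ x x', 0 ≤ P x x')
    (x x' : Bool) (u v : ℝ)
    (hu : u = ∑ a, P x a)
    (hv : 0 < ∑ a, P x a → v = P x x' / ∑ a, P x a) :
    v * u = P x x' := by
  have hsum0 : 0 ≤ ∑ a, P x a := Finset.sum_nonneg fun a _ => hP0 x a
  rcases hsum0.lt_or_eq with h | h
  · rw [hu, hv h, div_mul_cancel₀ _ (ne_of_gt h)]
  · have hle : P x x' ≤ ∑ a, P x a :=
      Finset.single_le_sum (fun a _ => hP0 x a) (Finset.mem_univ x')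
    have : P x x' = 0 := le_antisymm (hle.trans h.ge) (hP0 x x')
    rw [hu, ← h, mul_zero, this]

/-- Any two-decision, two-order dataset admits a three-state simple Markov model.
The state space is `Option Bool` with `none = ⋆`, `some x = s_x`. -/
theorem three_state_markov_model_reproduces_data
    (PAB PBA : Bool → Bool → ℝ)
    (hAB0 : ∀ x x', 0 ≤ PAB x x') (hAB1 : ∑ x, ∑ x', PAB x x' = 1)
    (hBA0 : ∀ x x', 0 ≤ PBA x x') (hBA1 : ∑ x, ∑ x', PBA x x' = 1)
    (f : Option Bool → Bool) (hf : ∀ b : Bool, f (some b) = b)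
    (TA TB : Option Bool → Option Bool → ℝ)
    -- TA s' s = probability of transitioning to s' from s
    (hTA0 : ∀ s' s, 0 ≤ TA s' s) (hTA1 : ∀ s, ∑ s', TA s' s = 1)
    (hTB0 : ∀ s' s, 0 ≤ TB s' s) (hTB1 : ∀ s, ∑ s', TB s' s = 1)
    (hTAstar : ∀ s, TA none s = 0) (hTBstar : ∀ s, TB none s = 0)
    (hTAinit : ∀ x : Bool, TA (some x) none = ∑ x', PAB x x')
    (hTBinit : ∀ x : Bool, TB (some x) none = ∑ x', PBA x x')
    (hTAcond : ∀ x x' : Bool, (0 < ∑ a, PBA x a) →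
        TA (some x') (some x) = PBA x x' / ∑ a, PBA x a)
    (hTBcond : ∀ x x' : Bool, (0 < ∑ a, PAB x a) →
        TB (some x') (some x) = PAB x x' / ∑ a, PAB x a) :
    (∀ x x' : Bool,
        (∑ s, ∑ s', if f s = x ∧ f s' = x' then TB s' s * TA s none else 0)
          = PAB x x') ∧
    (∀ x x' : Bool,
        (∑ s, ∑ s', if f s = x ∧ f s' = x' then TA s' s * TB s none else 0)
          = PBA x x') := by
  constructor
  · intro x x'
    simp only [Fintype.sum_option, Fintype.sum_bool, hf, hTAstar, hTBstar,
      mul_zero, zero_mul, ite_self, add_zero, zero_add]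
    cases x <;> cases x' <;> simp only [Bool.true_eq_false, Bool.false_eq_true,
        and_true, and_false, true_and, false_and, if_true, if_false, ite_self,
        ite_false, ite_true, add_zero, zero_add] <;>
      exact three_state_aux PAB hAB0 _ _ _ _ (hTAinit _) (hTBcond _ _)
  · intro x x'
    simp only [Fintype.sum_option, Fintype.sum_bool, hf, hTAstar, hTBstar,
      mul_zero, zero_mul, ite_self, add_zero, zero_add]
    cases x <;> cases x' <;> simp only [Bool.true_eq_false, Bool.false_eq_true,
        and_true, and_false, true_and, false_and, if_true, if_false, ite_self,
        ite_false, ite_true, add_zero, zero_add] <;>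
      exact three_state_aux PBA hBA0 _ _ _ _ (hTBinit _) (hTAcond _ _)
end

section
/- Consider joint decision data given by four probability distributions P(A⊗B), P(A'⊗B), P(A⊗B'), P(A'⊗B') on {y,n} × {y,n}, each arising from a classical parallel decision model: there exist finite sets S₁, S₂, a joint probability distribution ρ on S₁ × S₂, and probability channels A, A' : S₁ → {y,n}, B, B' : S₂ → {y,n} with P(C⊗D)(c,d) = ∑_{s₁,s₂} C(c|s₁) D(d|s₂) ρ(s₁,s₂) for each pair (C,D). Define Q(C,D) = P(C⊗D)(y,y) + P(C⊗D)(n,n). Then |Q(A,B) + Q(A',B) + Q(A',B') − Q(A,B') − 1| ≤ 1 (Bell-CHSH inequality). -/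
/-- Agreement probability `Q(C,D) = P(C⊗D)(y,y) + P(C⊗D)(n,n)` of a classical
parallel decision model with hidden state distribution ρ. -/
noncomputable def agreeProb {S₁ S₂ : Type*} [Fintype S₁] [Fintype S₂]
    (ρ : S₁ × S₂ → ℝ) (C : S₁ → Bool → ℝ) (D : S₂ → Bool → ℝ) : ℝ :=
  ∑ p : S₁ × S₂, (C p.1 true * D p.2 true + C p.1 false * D p.2 false) * ρ p

/-- Bell-CHSH inequality for classical parallel decision models. -/
theorem bell_chsh_inequality
    {S₁ S₂ : Type*} [Fintype S₁] [Fintype S₂]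
    (ρ : S₁ × S₂ → ℝ) (A A' : S₁ → Bool → ℝ) (B B' : S₂ → Bool → ℝ)
    (hρ0 : ∀ p, 0 ≤ ρ p) (hρ1 : ∑ p : S₁ × S₂, ρ p = 1)
    (hA0 : ∀ s c, 0 ≤ A s c) (hA1 : ∀ s, ∑ c, A s c = 1)
    (hA'0 : ∀ s c, 0 ≤ A' s c) (hA'1 : ∀ s, ∑ c, A' s c = 1)
    (hB0 : ∀ s c, 0 ≤ B s c) (hB1 : ∀ s, ∑ c, B s c = 1)
    (hB'0 : ∀ s c, 0 ≤ B' s c) (hB'1 : ∀ s, ∑ c, B' s c = 1) :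
    |agreeProb ρ A B + agreeProb ρ A' B + agreeProb ρ A' B'
        - agreeProb ρ A B' - 1| ≤ 1 := by
  have sumBool : ∀ (f : Bool → ℝ), (∑ c, f c) = f false + f true := by
    intro f; simp [Fintype.sum_bool]; ring
  have hAf : ∀ s, A s false = 1 - A s true := fun s => by
    have := hA1 s; rw [sumBool] at this; linarith
  have hA'f : ∀ s, A' s false = 1 - A' s true := fun s => by
    have := hA'1 s; rw [sumBool] at this; linarith
  have hBf : ∀ s, B s false = 1 - B s true := fun s => by
    have := hB1 s; rw [sumBool] at this; linarith
  have hB'f : ∀ s, B' s false = 1 - B' s true := fun s => by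
    have := hB'1 s; rw [sumBool] at this; linarith
  set g : S₁ × S₂ → ℝ := fun p =>
    ((2 * A p.1 true - 1) * ((2 * B p.2 true - 1) - (2 * B' p.2 true - 1))
      + (2 * A' p.1 true - 1) * ((2 * B p.2 true - 1) + (2 * B' p.2 true - 1))) / 2
    with hg
  have key : agreeProb ρ A B + agreeProb ρ A' B + agreeProb ρ A' B'
      - agreeProb ρ A B' - 1 = ∑ p : S₁ × S₂, g p * ρ p := by
    unfold agreeProb
    rw [show (1:ℝ) = ∑ p : S₁ × S₂, ρ p from hρ1.symm]
    rw [← Finset.sum_add_distrib, ← Finset.sum_add_distrib, ← Finset.sum_sub_distrib,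
      ← Finset.sum_sub_distrib]
    apply Finset.sum_congr rfl
    intro p _
    rw [hAf p.1, hA'f p.1, hBf p.2, hB'f p.2, hg]
    ring
  rw [key]
  calc |∑ p : S₁ × S₂, g p * ρ p| ≤ ∑ p : S₁ × S₂, |g p * ρ p| :=
        Finset.abs_sum_le_sum_abs _ _
    _ ≤ ∑ p : S₁ × S₂, ρ p := by
        apply Finset.sum_le_sum
        intro p _
        rw [abs_mul, abs_of_nonneg (hρ0 p)]
        have hgb : |g p| ≤ 1 := by
          have h1 := hA0 p.1 true
          have h2 := hA'0 p.1 true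
          have h3 := hB0 p.2 true
          have h4 := hB'0 p.2 true
          have h5 : A p.1 true ≤ 1 := by have := hA0 p.1 false; rw [hAf p.1] at this; linarith
          have h6 : A' p.1 true ≤ 1 := by have := hA'0 p.1 false; rw [hA'f p.1] at this; linarith
          have h7 : B p.2 true ≤ 1 := by have := hB0 p.2 false; rw [hBf p.2] at this; linarith
          have h8 : B' p.2 true ≤ 1 := by have := hB'0 p.2 false; rw [hB'f p.2] at this; linarith
          rw [abs_le, hg]
          constructor <;> nlinarith [mul_nonneg h1 h3, mul_nonneg h2 h4,
            mul_nonneg (sub_nonneg.2 h5) (sub_nonneg.2 h7),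
            mul_nonneg (sub_nonneg.2 h6) (sub_nonneg.2 h8),
            mul_nonneg h1 h4, mul_nonneg h2 h3,
            mul_nonneg (sub_nonneg.2 h5) (sub_nonneg.2 h8),
            mul_nonneg (sub_nonneg.2 h6) (sub_nonneg.2 h7),
            mul_nonneg h1 (sub_nonneg.2 h7), mul_nonneg h1 (sub_nonneg.2 h8),
            mul_nonneg h2 (sub_nonneg.2 h7), mul_nonneg h2 (sub_nonneg.2 h8),
            mul_nonneg (sub_nonneg.2 h5) h3, mul_nonneg (sub_nonneg.2 h5) h4,
            mul_nonneg (sub_nonneg.2 h6) h3, mul_nonneg (sub_nonneg.2 h6) h4]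
        nlinarith [hρ0 p]
    _ = 1 := hρ1
end

section
/- Let S be a finite set, and consider classical instruments A with outcomes X = {1, −1} and the trivial instrument B that outputs 1 with probability 1 and leaves the state unchanged. Suppose A is non-disturbing, i.e. A(x, s'|s) = m(x|s) δ_{s,s'} for a probability channel m (Bayesian form). Fix an initial distribution ρ on S, and for decision sequences D₁, D₂, D₃ ∈ {A, B} let P(D₁D₂D₃ = −1) be the probability that the product of the three outcomes is −1 under sequential application to ρ. Then P(AAB = −1) + P(BAA = −1) ≥ P(ABA = −1) (Temporal Bell inequality). -/
/-- Sequential probability that the product of the three `{+1,-1}`-valued outcomes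
(`true = +1`, `false = -1`) is `-1`, for three classical instruments applied in
sequence to an initial distribution ρ. The product is `-1` iff the xor of the
three booleans is `false`. -/
noncomputable def seqProbNeg {S : Type*} [Fintype S]
    (ρ : S → ℝ) (D₁ D₂ D₃ : S → Bool → S → ℝ) : ℝ :=
  ∑ s, ∑ s₁, ∑ s₂, ∑ s₃, ∑ x, ∑ y, ∑ z,
    if Bool.xor x (Bool.xor y z) = false then
      D₃ s₂ z s₃ * D₂ s₁ y s₂ * D₁ s x s₁ * ρ s
    else 0

/-- The Bayesian (non-disturbing) instrument of a probability channel `m`. -/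
noncomputable def bayesInst {S : Type*} [DecidableEq S]
    (m : S → Bool → ℝ) : S → Bool → S → ℝ :=
  fun s x s' => m s x * (if s = s' then 1 else 0)

/-- The trivial instrument `B`: outputs `+1` (i.e. `true`) with probability 1
and leaves the state unchanged. -/
noncomputable def trivialInst {S : Type*} [DecidableEq S] : S → Bool → S → ℝ :=
  fun s x s' => if x = true ∧ s = s' then 1 else 0

lemma delta3 {S : Type*} [Fintype S] [DecidableEq S] (f : S → S → S → ℝ) :
    (∑ x : S, ∑ x1 : S, ∑ x2 : S, ∑ x3 : S,
      if x = x1 then if x1 = x2 then if x2 = x3 then f x x1 x2 else 0 else 0 else 0)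
    = ∑ x : S, f x x x := by
  refine Finset.sum_congr rfl fun x _ => ?_
  rw [Finset.sum_eq_single_of_mem x (Finset.mem_univ x)]
  · rw [Finset.sum_eq_single_of_mem x (Finset.mem_univ x)]
    · simp
    · intro b _ hb; simp [Ne.symm hb]
  · intro b _ hb; simp [Ne.symm hb]

set_option maxHeartbeats 2000000 in
lemma e1 {S : Type*} [Fintype S] [DecidableEq S] (m : S → Bool → ℝ) (ρ : S → ℝ) :
    seqProbNeg ρ (bayesInst m) (trivialInst) (bayesInst m)
      = ∑ s, (m s true * m s false + m s false * m s true) * ρ s := by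
  simp only [seqProbNeg, bayesInst, trivialInst, Fintype.sum_bool, Bool.xor_true, Bool.xor_false,
    Bool.not_true, Bool.not_false, mul_ite, ite_mul, mul_one, mul_zero, one_mul, zero_mul,
    if_true, if_false, Finset.sum_ite_eq, Finset.sum_ite_eq', Finset.mem_univ, true_and,
    and_true, false_and, and_false, reduceIte, Bool.xor_self, zero_add, add_zero,
    Finset.sum_const_zero]
  simp only [Bool.true_eq_false, Bool.false_eq_true, if_false, false_and,
    Finset.sum_add_distrib, Finset.sum_ite_eq, Finset.mem_univ, if_true, ite_self,
    Finset.sum_const_zero, add_zero, zero_add, mul_zero, zero_mul]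
  rw [delta3 (fun a _ b => m b false * m a true * ρ a),
    delta3 (fun a _ b => m b true * m a false * ρ a), ← Finset.sum_add_distrib]
  exact Finset.sum_congr rfl fun s _ => by ring

set_option maxHeartbeats 2000000 in
lemma e2 {S : Type*} [Fintype S] [DecidableEq S] (m : S → Bool → ℝ) (ρ : S → ℝ) :
    seqProbNeg ρ (bayesInst m) (bayesInst m) (trivialInst)
      = ∑ s, (m s true * m s false + m s false * m s true) * ρ s := by
  simp only [seqProbNeg, bayesInst, trivialInst, Fintype.sum_bool, Bool.xor_true, Bool.xor_false,
    Bool.not_true, Bool.not_false, mul_ite, ite_mul, mul_one, mul_zero, one_mul, zero_mul,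
    if_true, if_false, Finset.sum_ite_eq, Finset.sum_ite_eq', Finset.mem_univ, true_and,
    and_true, false_and, and_false, reduceIte, Bool.xor_self, zero_add, add_zero,
    Finset.sum_const_zero]
  simp only [Bool.true_eq_false, Bool.false_eq_true, if_false, false_and,
    Finset.sum_add_distrib, Finset.sum_ite_eq, Finset.mem_univ, if_true, ite_self,
    Finset.sum_const_zero, add_zero, zero_add, mul_zero, zero_mul]
  rw [delta3 (fun a b _ => m b false * m a true * ρ a),
    delta3 (fun a b _ => m b true * m a false * ρ a), ← Finset.sum_add_distrib]
  exact Finset.sum_congr rfl fun s _ => by ring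

set_option maxHeartbeats 2000000 in
lemma e3 {S : Type*} [Fintype S] [DecidableEq S] (m : S → Bool → ℝ) (ρ : S → ℝ) :
    seqProbNeg ρ (trivialInst) (bayesInst m) (bayesInst m)
      = ∑ s, (m s true * m s false + m s false * m s true) * ρ s := by
  simp only [seqProbNeg, bayesInst, trivialInst, Fintype.sum_bool, Bool.xor_true, Bool.xor_false,
    Bool.not_true, Bool.not_false, mul_ite, ite_mul, mul_one, mul_zero, one_mul, zero_mul,
    if_true, if_false, Finset.sum_ite_eq, Finset.sum_ite_eq', Finset.mem_univ, true_and,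
    and_true, false_and, and_false, reduceIte, Bool.xor_self, zero_add, add_zero,
    Finset.sum_const_zero]
  simp only [Bool.true_eq_false, Bool.false_eq_true, if_false, false_and,
    Finset.sum_add_distrib, Finset.sum_ite_eq, Finset.mem_univ, if_true, ite_self,
    Finset.sum_const_zero, add_zero, zero_add, mul_zero, zero_mul]
  rw [delta3 (fun a b c => m c false * m b true * ρ a),
    delta3 (fun a b c => m c true * m b false * ρ a), ← Finset.sum_add_distrib]
  exact Finset.sum_congr rfl fun s _ => by ring

/-- Temporal Bell inequality:
`P(AAB = -1) + P(BAA = -1) ≥ P(ABA = -1)` for a non-disturbing (Bayesian)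
instrument `A` and the trivial instrument `B`. -/
theorem temporal_bell_inequality
    {S : Type*} [Fintype S] [DecidableEq S]
    (m : S → Bool → ℝ) (ρ : S → ℝ)
    (hm0 : ∀ s x, 0 ≤ m s x) (hm1 : ∀ s, ∑ x, m s x = 1)
    (hρ0 : ∀ s, 0 ≤ ρ s) (hρ1 : ∑ s, ρ s = 1) :
    seqProbNeg ρ (bayesInst m) (trivialInst) (bayesInst m)
      ≤ seqProbNeg ρ (bayesInst m) (bayesInst m) (trivialInst)
        + seqProbNeg ρ (trivialInst) (bayesInst m) (bayesInst m) := by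
  rw [e1, e2, e3]
  have h : 0 ≤ ∑ s, (m s true * m s false + m s false * m s true) * ρ s :=
    Finset.sum_nonneg fun s _ => mul_nonneg
      (by have := hm0 s true; have := hm0 s false; positivity) (hρ0 s)
  linarith
end
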